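/- arXiv:2408.04952 — 6 statements merged into one kernel-verified Lean document; each statement's English description precedes it below -/
import Mathlib

section
/- The Bartholdi zeta function of a bipartite graph is an even function of q; equivalently, for a bipartite graph, det(1 − qA + q²Q_u) is an even polynomial in q. -/
open Matrix

/-- For a bipartite simple graph `G`, the determinant `det(1 − qA + q²Q_u)` appearing in
the vertex expression of the Bartholdi zeta function is an even function of `q`;
hence the Bartholdi zeta function is even in `q`. -/
theorem bartholdi_det_even_of_bipartite
    {V : Type*} [Fintype V] [DecidableEq V]
    (G : SimpleGraph V) [DecidableRel G.Adj]
    (hbip : G.Colorable 2)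
    (A D : Matrix V V ℝ) (Qu : ℝ → Matrix V V ℝ)
    (hA : A = G.adjMatrix ℝ)
    (hD : D = Matrix.diagonal fun v => (G.degree v : ℝ))
    (hQ : ∀ u : ℝ, Qu u = (1 - u) • (D - (1 - u) • (1 : Matrix V V ℝ))) :
    ∀ q u : ℝ,
      ((1 : Matrix V V ℝ) - q • A + q ^ 2 • Qu u).det =
      ((1 : Matrix V V ℝ) - (-q) • A + (-q) ^ 2 • Qu u).det := by
  intro q u
  obtain ⟨c⟩ := hbip
  set s : V → ℝ := fun v => if c v = 0 then 1 else -1 with hs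
  have hs2 : ∀ v, s v * s v = 1 := by
    intro v; by_cases h : c v = 0 <;> simp [hs, h]
  set S : Matrix V V ℝ := Matrix.diagonal s with hSdef
  have hSS : S * S = 1 := by
    rw [hSdef, Matrix.diagonal_mul_diagonal]
    have : (fun v => s v * s v) = fun _ => (1 : ℝ) := funext hs2
    rw [this, Matrix.diagonal_one]
  have hSAS : S * A * S = -A := by
    subst hA
    ext i j
    rw [hSdef]
    simp only [Matrix.mul_diagonal, Matrix.diagonal_mul, Matrix.neg_apply,
      SimpleGraph.adjMatrix_apply]
    by_cases h : G.Adj i j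
    · have hne : c i ≠ c j := c.valid h
      by_cases hi : c i = 0 <;> by_cases hj : c j = 0
      · exact absurd (hi.trans hj.symm) hne
      · simp [h, hs, hi, hj]
      · simp [h, hs, hi, hj]
      · have h1 : ∀ a : Fin 2, a ≠ 0 → a = 1 := by decide
        exact absurd ((h1 _ hi).trans (h1 _ hj).symm) hne
    · simp [h]
  have hSdiag : ∀ d : V → ℝ, S * Matrix.diagonal d * S = Matrix.diagonal d := by
    intro d
    rw [hSdef, Matrix.diagonal_mul_diagonal, Matrix.diagonal_mul_diagonal]
    refine congrArg Matrix.diagonal (funext fun v => ?_)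
    calc s v * d v * s v = s v * s v * d v := by ring
    _ = d v := by rw [hs2 v, one_mul]
  have hS1S : S * (1 : Matrix V V ℝ) * S = 1 := by
    rw [Matrix.mul_one, hSS]
  have hSQS : S * Qu u * S = Qu u := by
    rw [hQ, hD, Matrix.mul_smul, Matrix.smul_mul, Matrix.mul_sub, Matrix.sub_mul,
      Matrix.mul_smul, Matrix.smul_mul, hSdiag, Matrix.mul_one, hSS]
  have key : (1 : Matrix V V ℝ) - (-q) • A + (-q) ^ 2 • Qu u =
      S * ((1 : Matrix V V ℝ) - q • A + q ^ 2 • Qu u) * S := by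
    rw [Matrix.mul_add, Matrix.add_mul, Matrix.mul_sub, Matrix.sub_mul,
      Matrix.mul_smul, Matrix.smul_mul, Matrix.mul_smul, Matrix.smul_mul,
      hS1S, hSAS, hSQS]
    rw [neg_sq, smul_neg]
    module
  rw [key, Matrix.det_mul, Matrix.det_mul]
  have hdet : S.det * S.det = 1 := by rw [← Matrix.det_mul, hSS, Matrix.det_one]
  linear_combination (-((1 : Matrix V V ℝ) - q • A + q ^ 2 • Qu u).det) * hdet
end

section
/- For a (t+1)-regular connected simple graph G with t ≥ 1 and u ≠ 1, −t, both q = (1−u)^{-1} and q = (t+u)^{-1} are poles of the Bartholdi zeta function ζ_G(q,u), and these attain the boundaries of the critical strip: the set of pole magnitudes lies between min(|t+u|^{-1},|1−u|^{-1}) and max(|t+u|^{-1},|1−u|^{-1}). -/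
/-!
With `b = 1 - u` and `c = t + u`, the adjacency matrix `A` is Hermitian, so the determinant
factors over its real eigenvalues `λ` as `∏ (1 + b c q² - λ q)`. The all-ones vector gives the
eigenvalue `λ = t + 1 = b + c`, whose factor is `(1 - b q)(1 - c q)`: these are the two poles.
Every zero of `f` has `|q| = |b|⁻¹` or is a root of `1 - λ q + b c q²` with `|λ| ≤ b + c`
(Gershgorin). For such a root `(b²|q|² - 1)(c²|q|² - 1) ≤ 0`: for real `q` this product equals
`(λ² - (b + c)²) q²`, and for non-real `q` the imaginary part of the equation forces
`b c |q|² = 1`. This inequality says exactly that `|q|` lies between `|b|⁻¹` and `|c|⁻¹`.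
-/

open Matrix Module.End

theorem Set.mem_uIcc_of_sub_mul_sub_nonpos {R : Type*} [CommRing R] [LinearOrder R]
    [IsStrictOrderedRing R] {a b x : R} (h : (x - a) * (x - b) ≤ 0) : x ∈ Set.uIcc a b := by
  rcases le_total a b with hab | hba
  · rw [Set.uIcc_of_le hab]
    exact (sub_mul_sub_nonpos_iff x hab).mp h
  · rw [Set.uIcc_of_ge hba]
    exact (sub_mul_sub_nonpos_iff x hba).mp (mul_comm (x - a) (x - b) ▸ h)

theorem mem_uIcc_inv_abs_of_sq_mul_sub_one_mul_nonpos {b c r : ℝ} (hb : b ≠ 0) (hc : c ≠ 0)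
    (hr : 0 ≤ r) (h : (b ^ 2 * r ^ 2 - 1) * (c ^ 2 * r ^ 2 - 1) ≤ 0) :
    r ∈ Set.uIcc |b|⁻¹ |c|⁻¹ := by
  have hb' : 0 < |b| := abs_pos.mpr hb
  have hc' : 0 < |c| := abs_pos.mpr hc
  have hfactor : (|b| * r - 1) * (|c| * r - 1) ≤ 0 := by
    have hpos : 0 < (|b| * r + 1) * (|c| * r + 1) := by positivity
    refine nonpos_of_mul_nonpos_left ?_ hpos
    calc (|b| * r - 1) * (|c| * r - 1) * ((|b| * r + 1) * (|c| * r + 1))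
        = (|b| ^ 2 * r ^ 2 - 1) * (|c| ^ 2 * r ^ 2 - 1) := by ring
      _ ≤ 0 := by rwa [sq_abs, sq_abs]
  apply Set.mem_uIcc_of_sub_mul_sub_nonpos
  have hrescale : (r - |b|⁻¹) * (r - |c|⁻¹) = (|b| * r - 1) * (|c| * r - 1) / (|b| * |c|) := by
    field_simp
  rw [hrescale]
  exact div_nonpos_of_nonpos_of_nonneg hfactor (by positivity)

theorem Complex.sq_mul_sq_norm_sub_one_mul_nonpos_of_root {b c μ : ℝ} (hμ : |μ| ≤ |b + c|)
    {q : ℂ} (hq : 1 + b * c * q ^ 2 - q * μ = 0) :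
    (b ^ 2 * ‖q‖ ^ 2 - 1) * (c ^ 2 * ‖q‖ ^ 2 - 1) ≤ 0 := by
  by_cases him : q.im = 0
  · obtain ⟨r, rfl⟩ : ∃ r : ℝ, q = r := ⟨q.re, Complex.ext rfl (by simpa using him)⟩
    have hr : 1 + b * c * r ^ 2 - r * μ = 0 := by exact_mod_cast hq
    rw [Complex.norm_real, Real.norm_eq_abs, sq_abs]
    have key : (b ^ 2 * r ^ 2 - 1) * (c ^ 2 * r ^ 2 - 1) = (μ ^ 2 - (b + c) ^ 2) * r ^ 2 := by
      linear_combination (b * c * r ^ 2 + r * μ + 1) * hr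
    rw [key]
    exact mul_nonpos_of_nonpos_of_nonneg (by linarith [sq_le_sq.mpr hμ]) (sq_nonneg r)
  · have hre := congrArg Complex.re hq
    have him' := congrArg Complex.im hq
    simp only [pow_two, Complex.add_re, Complex.sub_re, Complex.mul_re, Complex.add_im,
      Complex.sub_im, Complex.mul_im, Complex.ofReal_re, Complex.ofReal_im, Complex.one_re,
      Complex.one_im, Complex.zero_re, Complex.zero_im] at hre him'
    have hμ' : μ = 2 * b * c * q.re := by
      apply mul_left_cancel₀ him
      linear_combination -him'
    have hbc : b * c * ‖q‖ ^ 2 = 1 := by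
      rw [Complex.sq_norm, Complex.normSq_apply]
      linear_combination -hre - q.re * hμ'
    nlinarith [sq_nonneg (b - c), sq_nonneg ‖q‖]

namespace Matrix.IsHermitian

variable {𝕜 n : Type*} [RCLike 𝕜] [Fintype n] [DecidableEq n] {A : Matrix n n 𝕜}

theorem det_smul_one_sub_smul (hA : A.IsHermitian) (κ q : 𝕜) :
    (κ • (1 : Matrix n n 𝕜) - q • A).det = ∏ i, (κ - q * hA.eigenvalues i) := by
  have hconj : κ • (1 : Matrix n n 𝕜) - q • A = Unitary.conjStarAlgAut 𝕜 _ hA.eigenvectorUnitary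
      (diagonal fun i ↦ κ - q * hA.eigenvalues i) := by
    conv_lhs => rw [hA.spectral_theorem]
    rw [← map_one (Unitary.conjStarAlgAut 𝕜 _ hA.eigenvectorUnitary), ← map_smul, ← map_smul,
      ← map_sub]
    congr 1
    ext i j
    by_cases h : i = j <;> simp [diagonal, h]
  rw [hconj, Unitary.conjStarAlgAut_apply, det_mul_comm, ← mul_assoc]
  simp

theorem hasEigenvalue_toLin'_ofReal_iff (hA : A.IsHermitian) (μ : ℝ) :
    HasEigenvalue (toLin' A) (μ : 𝕜) ↔ μ ∈ Set.range hA.eigenvalues := by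
  rw [hasEigenvalue_iff_mem_spectrum, spectrum_toLin', hA.spectrum_eq_image_range,
    RCLike.ofReal_injective.mem_set_image]

end Matrix.IsHermitian

namespace SimpleGraph.IsRegularOfDegree

variable {V : Type*} [Fintype V] [DecidableEq V] {G : SimpleGraph V} [DecidableRel G.Adj] {d : ℕ}

theorem hasEigenvalue_adjMatrix {R : Type*} [CommRing R] [Nontrivial R] [Nonempty V]
    (h : G.IsRegularOfDegree d) : HasEigenvalue (toLin' (G.adjMatrix R)) d := by
  refine hasEigenvalue_of_hasEigenvector (x := Function.const V 1) ⟨?_, ?_⟩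
  · rw [mem_eigenspace_iff]
    ext i
    simp [h i]
  · exact Function.const_ne_zero.mpr one_ne_zero

theorem norm_le_of_hasEigenvalue {K : Type*} [NormedField K] (h : G.IsRegularOfDegree d) {μ : K}
    (hμ : HasEigenvalue (toLin' (G.adjMatrix K)) μ) : ‖μ‖ ≤ d := by
  obtain ⟨k, hk⟩ := eigenvalue_mem_ball hμ
  have hrow : ∑ j ∈ Finset.univ.erase k, ‖G.adjMatrix K k j‖ = d := by
    rw [Finset.sum_erase _ (by simp), ← h k, ← card_neighborFinset_eq_degree,
      neighborFinset_eq_filter]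
    simp [adjMatrix_apply, apply_ite norm]
  rw [hrow, mem_closedBall_iff_norm] at hk
  simpa using hk

variable {𝕜 : Type*} [RCLike 𝕜]

theorem exists_eigenvalues_adjMatrix_eq [Nonempty V] (h : G.IsRegularOfDegree d)
    (hA : (G.adjMatrix 𝕜).IsHermitian) : ∃ i, hA.eigenvalues i = d :=
  (hA.hasEigenvalue_toLin'_ofReal_iff d).mp (by exact_mod_cast h.hasEigenvalue_adjMatrix)

theorem abs_eigenvalues_adjMatrix_le (h : G.IsRegularOfDegree d)
    (hA : (G.adjMatrix 𝕜).IsHermitian) (i : V) : |hA.eigenvalues i| ≤ d := by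
  simpa using h.norm_le_of_hasEigenvalue ((hA.hasEigenvalue_toLin'_ofReal_iff _).mpr ⟨i, rfl⟩)

end SimpleGraph.IsRegularOfDegree

theorem regular_graph_critical_strip_saturated_general
    {V : Type*} [Fintype V] [DecidableEq V]
    (G : SimpleGraph V) [DecidableRel G.Adj]
    (hconn : G.Connected)
    (t : ℕ) (hreg : G.IsRegularOfDegree (t + 1))
    (u : ℝ) (hu1 : u ≠ 1) (hu2 : u ≠ -(t : ℝ))
    (f : ℂ → ℂ)
    (hf : ∀ q : ℂ, f q =
      (1 - ((1 - u : ℝ) : ℂ) ^ 2 * q ^ 2) ^ (G.edgeFinset.card - Fintype.card V) *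
        ((1 + ((1 - u : ℝ) : ℂ) * (((t : ℝ) + u : ℝ) : ℂ) * q ^ 2) • (1 : Matrix V V ℂ) -
          q • G.adjMatrix ℂ).det) :
    f (((1 - u : ℝ) : ℂ))⁻¹ = 0 ∧
    f ((((t : ℝ) + u : ℝ) : ℂ))⁻¹ = 0 ∧
    ∀ q : ℂ, f q = 0 →
      min |(t : ℝ) + u|⁻¹ |1 - u|⁻¹ ≤ ‖q‖ ∧
      ‖q‖ ≤ max |(t : ℝ) + u|⁻¹ |1 - u|⁻¹ := by
  have : Nonempty V := hconn.nonempty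
  have hA := G.isHermitian_adjMatrix ℂ
  set b : ℝ := 1 - u
  set c : ℝ := (t : ℝ) + u
  have hb : b ≠ 0 := sub_ne_zero.mpr hu1.symm
  have hc : c ≠ 0 := fun h ↦ hu2 (by linarith)
  have hbc : ((t + 1 : ℕ) : ℝ) = c + b := by push_cast; ring
  have hfq : ∀ q, f q = (1 - (b : ℂ) ^ 2 * q ^ 2) ^ (G.edgeFinset.card - Fintype.card V) *
      ∏ i, (1 + b * c * q ^ 2 - q * hA.eigenvalues i) := fun q ↦
    (hf q).trans (congrArg _ (hA.det_smul_one_sub_smul _ _))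
  obtain ⟨i₀, hi₀⟩ := hreg.exists_eigenvalues_adjMatrix_eq hA
  have hpole : ∀ q : ℂ, (1 - b * q) * (1 - c * q) = 0 → f q = 0 := fun q hq ↦ by
    rw [hfq, Finset.prod_eq_zero (Finset.mem_univ i₀) (by rw [hi₀, hbc, ← hq]; push_cast; ring),
      mul_zero]
  refine ⟨hpole _ (by simp [hb]), hpole _ (by simp [hc]), fun q hq ↦ ?_⟩
  suffices h : ‖q‖ ∈ Set.uIcc |c|⁻¹ |b|⁻¹ from h
  refine mem_uIcc_inv_abs_of_sq_mul_sub_one_mul_nonpos hc hb (norm_nonneg q) ?_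
  rcases mul_eq_zero.mp ((hfq q).symm.trans hq) with hfactor | hdet
  · have hq1 : b ^ 2 * ‖q‖ ^ 2 = 1 := by
      simpa using congrArg norm (sub_eq_zero.mp (eq_zero_of_pow_eq_zero hfactor)).symm
    simp [hq1]
  · obtain ⟨i, -, hi⟩ := Finset.prod_eq_zero_iff.mp hdet
    have hμ : |hA.eigenvalues i| ≤ |c + b| :=
      (hbc ▸ hreg.abs_eigenvalues_adjMatrix_le hA i).trans (le_abs_self _)
    exact Complex.sq_mul_sq_norm_sub_one_mul_nonpos_of_root hμ (by linear_combination hi)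

/-- For a connected `(t+1)`-regular simple graph `G` with `t ≥ 1` and `u ≠ 1, −t`,
both `q = (1−u)⁻¹` and `q = (t+u)⁻¹` are poles of the Bartholdi zeta function
(zeros of `f(q) = (1−(1−u)²q²)^(n_E−n_V) det((1+(1−u)(t+u)q²)·1 − qA)`, the reciprocal
of `ζ_G(q,u)`), and every pole `q` satisfies
`min(|t+u|⁻¹, |1−u|⁻¹) ≤ |q| ≤ max(|t+u|⁻¹, |1−u|⁻¹)`. -/
theorem regular_graph_critical_strip_saturated
    {V : Type*} [Fintype V] [DecidableEq V]
    (G : SimpleGraph V) [DecidableRel G.Adj]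
    (hconn : G.Connected)
    (t : ℕ) (ht : 1 ≤ t) (hreg : G.IsRegularOfDegree (t + 1))
    (u : ℝ) (hu1 : u ≠ 1) (hu2 : u ≠ -(t : ℝ))
    (f : ℂ → ℂ)
    (hf : ∀ q : ℂ, f q =
      (1 - ((1 - u : ℝ) : ℂ) ^ 2 * q ^ 2) ^ (G.edgeFinset.card - Fintype.card V) *
        ((1 + ((1 - u : ℝ) : ℂ) * (((t : ℝ) + u : ℝ) : ℂ) * q ^ 2) • (1 : Matrix V V ℂ) -
          q • G.adjMatrix ℂ).det) :
    f (((1 - u : ℝ) : ℂ))⁻¹ = 0 ∧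
    f ((((t : ℝ) + u : ℝ) : ℂ))⁻¹ = 0 ∧
    ∀ q : ℂ, f q = 0 →
      min |(t : ℝ) + u|⁻¹ |1 - u|⁻¹ ≤ ‖q‖ ∧
      ‖q‖ ≤ max |(t : ℝ) + u|⁻¹ |1 - u|⁻¹ :=
  regular_graph_critical_strip_saturated_general G hconn t hreg u hu1 hu2 f hf
end

section
/- Functional equation in the bump parameter: for a (t+1)-regular graph, ζ_G(q, 1−t−u) = ((1 − (1−u)²q²)/(1 − (t+u)²q²))^{n_E−n_V} · ζ_G(q, u). -/
open Matrix

/-- Functional equation in the bump parameter: for a `(t+1)`-regular simple graph `G`,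
the Bartholdi zeta function
`ζ_G(q,w) = (1 − (1−w)²q²)^(n_V−n_E) · det((1 + (1−w)(t+w)q²)·1 − qA)⁻¹`
satisfies `ζ_G(q, 1−t−u) = ((1 − (1−u)²q²)/(1 − (t+u)²q²))^(n_E−n_V) · ζ_G(q,u)`
as rational functions, i.e. at every point where all factors are defined. -/
theorem bartholdi_functional_equation_bump
    {V : Type*} [Fintype V] [DecidableEq V]
    (G : SimpleGraph V) [DecidableRel G.Adj]
    (hconn : G.Connected)
    (t : ℕ) (hreg : G.IsRegularOfDegree (t + 1))
    (zeta : ℝ → ℝ → ℝ)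
    (hzeta : ∀ q w : ℝ, zeta q w =
      (1 - (1 - w) ^ 2 * q ^ 2) ^ ((Fintype.card V : ℤ) - (G.edgeFinset.card : ℤ)) *
        (((1 + (1 - w) * ((t : ℝ) + w) * q ^ 2) • (1 : Matrix V V ℝ) -
          q • G.adjMatrix ℝ).det)⁻¹) :
    ∀ q u : ℝ,
      1 - (1 - u) ^ 2 * q ^ 2 ≠ 0 →
      1 - ((t : ℝ) + u) ^ 2 * q ^ 2 ≠ 0 →
      ((1 + (1 - u) * ((t : ℝ) + u) * q ^ 2) • (1 : Matrix V V ℝ) -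
        q • G.adjMatrix ℝ).det ≠ 0 →
      zeta q (1 - (t : ℝ) - u) =
        ((1 - (1 - u) ^ 2 * q ^ 2) / (1 - ((t : ℝ) + u) ^ 2 * q ^ 2)) ^
            ((G.edgeFinset.card : ℤ) - (Fintype.card V : ℤ)) *
          zeta q u := by
  intro q u ha hb hd
  have h1 : (1:ℝ) - (1 - (1 - (t:ℝ) - u)) ^ 2 * q ^ 2 = 1 - ((t:ℝ) + u) ^ 2 * q ^ 2 := by
    ring
  have h2 : (1:ℝ) + (1 - (1 - (t:ℝ) - u)) * ((t:ℝ) + (1 - (t:ℝ) - u)) * q ^ 2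
      = 1 + (1 - u) * ((t:ℝ) + u) * q ^ 2 := by ring
  rw [hzeta, hzeta, h1, h2]
  set N : ℤ := (Fintype.card V : ℤ) - (G.edgeFinset.card : ℤ) with hN
  have hEN : ((G.edgeFinset.card : ℤ) - (Fintype.card V : ℤ)) = -N := by omega
  set a : ℝ := 1 - (1 - u) ^ 2 * q ^ 2
  set b : ℝ := 1 - ((t:ℝ) + u) ^ 2 * q ^ 2
  have haN : a ^ N ≠ 0 := zpow_ne_zero _ ha
  rw [hEN, _root_.zpow_neg, ← _root_.inv_zpow, inv_div, div_zpow]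
  field_simp
end

section
/- Functional equation in q: for a (t+1)-regular graph and u ≠ 1, −t, ζ_G(1/((1−u)(t+u)q), u) = (−1)^{n_E−n_V}(1−u)^{n_V}(t+u)^{2n_E−n_V} q^{2n_E} · ((1 − (1−u)²q²)/(1 − (t+u)²q²))^{n_E−n_V} · ζ_G(q,u). -/
open Matrix

lemma bartholdi_key_identity (c d q B C D : ℝ) (hc : c ≠ 0) (hd : d ≠ 0) (hq : q ≠ 0)
    (hB : B ≠ 0) (hC : C ≠ 0) (hD : D ≠ 0) (N M : ℕ) :
    (-(C * (d ^ 2 * q ^ 2)⁻¹)) ^ ((N : ℤ) - (M : ℤ)) * (((c * d * q ^ 2)⁻¹) ^ N * D)⁻¹ =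
      (-1 : ℝ) ^ ((M : ℤ) - (N : ℤ)) * c ^ N * d ^ (2 * (M : ℤ) - (N : ℤ)) * q ^ (2 * M) *
        (B / C) ^ ((M : ℤ) - (N : ℤ)) * (B ^ ((N : ℤ) - (M : ℤ)) * D⁻¹) := by
  have hd2 : d ^ 2 ≠ 0 := pow_ne_zero _ hd
  have hq2 : q ^ 2 ≠ 0 := pow_ne_zero _ hq
  rw [← zpow_natCast c N, ← zpow_natCast q (2*M), ← zpow_natCast ((c*d*q^2)⁻¹) N]
  push_cast
  simp only [neg_mul_eq_neg_mul, ← neg_one_mul C, mul_zpow, div_zpow, zpow_sub₀, _root_.zpow_neg,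
    mul_zpow, _root_.inv_zpow, zpow_add₀, hc, hd, hq, hB, hC, hD, hd2, hq2, neg_ne_zero, one_ne_zero,
    inv_ne_zero, mul_ne_zero, Ne, not_false_iff, zpow_two, _root_.zpow_mul]
  simp only [zpow_natCast, inv_inv]
  field_simp
  ring_nf
  simp only [pow_mul', neg_one_sq, one_pow]

/-- Functional equation in `q`: for a `(t+1)`-regular simple graph `G` and `u ≠ 1, −t`,
the Bartholdi zeta function
`ζ_G(q,w) = (1 − (1−w)²q²)^(n_V−n_E) · det((1 + (1−w)(t+w)q²)·1 − qA)⁻¹` satisfies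
`ζ_G(1/((1−u)(t+u)q), u) = (−1)^(n_E−n_V) (1−u)^(n_V) (t+u)^(2n_E−n_V) q^(2n_E) ·
((1 − (1−u)²q²)/(1 − (t+u)²q²))^(n_E−n_V) · ζ_G(q,u)` as rational functions of `q`,
i.e. at every point where all factors are defined. -/
theorem bartholdi_functional_equation_q
    {V : Type*} [Fintype V] [DecidableEq V]
    (G : SimpleGraph V) [DecidableRel G.Adj]
    (hconn : G.Connected)
    (t : ℕ) (hreg : G.IsRegularOfDegree (t + 1))
    (u : ℝ) (hu1 : u ≠ 1) (hu2 : u ≠ -(t : ℝ))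
    (zeta : ℝ → ℝ → ℝ)
    (hzeta : ∀ q w : ℝ, zeta q w =
      (1 - (1 - w) ^ 2 * q ^ 2) ^ ((Fintype.card V : ℤ) - (G.edgeFinset.card : ℤ)) *
        (((1 + (1 - w) * ((t : ℝ) + w) * q ^ 2) • (1 : Matrix V V ℝ) -
          q • G.adjMatrix ℝ).det)⁻¹) :
    ∀ q : ℝ, q ≠ 0 →
      1 - (1 - u) ^ 2 * q ^ 2 ≠ 0 →
      1 - ((t : ℝ) + u) ^ 2 * q ^ 2 ≠ 0 →
      ((1 + (1 - u) * ((t : ℝ) + u) * q ^ 2) • (1 : Matrix V V ℝ) -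
        q • G.adjMatrix ℝ).det ≠ 0 →
      zeta ((1 - u) * ((t : ℝ) + u) * q)⁻¹ u =
        (-1 : ℝ) ^ ((G.edgeFinset.card : ℤ) - (Fintype.card V : ℤ)) *
          (1 - u) ^ (Fintype.card V) *
          ((t : ℝ) + u) ^ (2 * (G.edgeFinset.card : ℤ) - (Fintype.card V : ℤ)) *
          q ^ (2 * G.edgeFinset.card) *
          ((1 - (1 - u) ^ 2 * q ^ 2) / (1 - ((t : ℝ) + u) ^ 2 * q ^ 2)) ^
            ((G.edgeFinset.card : ℤ) - (Fintype.card V : ℤ)) *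
          zeta q u := by
  intro q hq hB hC hD
  have hc : (1 : ℝ) - u ≠ 0 := sub_ne_zero.mpr fun h => hu1 h.symm
  have hd : (t : ℝ) + u ≠ 0 := fun h => hu2 (by linarith)
  have hq2 : q ^ 2 ≠ 0 := pow_ne_zero _ hq
  have hcdq2 : (1 - u) * ((t : ℝ) + u) * q ^ 2 ≠ 0 := mul_ne_zero (mul_ne_zero hc hd) hq2
  rw [hzeta, hzeta]
  have hM : (1 + (1 - u) * ((t : ℝ) + u) * (((1 - u) * ((t : ℝ) + u) * q)⁻¹) ^ 2) •
        (1 : Matrix V V ℝ) - ((1 - u) * ((t : ℝ) + u) * q)⁻¹ • G.adjMatrix ℝ =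
      ((1 - u) * ((t : ℝ) + u) * q ^ 2)⁻¹ •
        ((1 + (1 - u) * ((t : ℝ) + u) * q ^ 2) • (1 : Matrix V V ℝ) - q • G.adjMatrix ℝ) := by
    rw [smul_sub, smul_smul, smul_smul]
    congr 2
    · field_simp
      ring
    · field_simp
  rw [hM, det_smul]
  have hA : 1 - (1 - u) ^ 2 * (((1 - u) * ((t : ℝ) + u) * q)⁻¹) ^ 2 =
      -((1 - ((t : ℝ) + u) ^ 2 * q ^ 2) * (((t : ℝ) + u) ^ 2 * q ^ 2)⁻¹) := by
    field_simp
    ring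
  rw [hA]
  exact bartholdi_key_identity (1 - u) ((t : ℝ) + u) q _ _ _ hc hd hq hB hC hD _ _
end

section
/- Riemann hypothesis for the Bartholdi zeta function: let G be a (t+1)-regular graph and u real with (1−u)(t+u) > 0. If every eigenvalue λ ≠ t+1 of the adjacency matrix satisfies λ² < 4(1−u)(t+u), then every pole q of ζ_G(q,u) other than q = ±(1−u)^{-1} and q = (t+u)^{-1} satisfies |q| = ((1−u)(t+u))^{-1/2}. -/
/-!
Away from the trivial poles, a pole `q` is a root of `1 - λ q + (1 - u)(t + u) q²` for an eigenvalue
`λ` of the adjacency matrix. For `λ = t + 1` this quadratic is `(1 - (1 - u) q)(1 - (t + u) q)`,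
giving only trivial poles. Otherwise its discriminant `λ² - 4(1 - u)(t + u)` is negative, so its
roots are a pair of complex conjugates whose product is `((1 - u)(t + u))⁻¹`.
-/

open Matrix Polynomial ComplexConjugate

theorem SimpleGraph.adjMatrix_map {V R S : Type*} (G : SimpleGraph V) [DecidableRel G.Adj]
    [NonAssocSemiring R] [NonAssocSemiring S] (f : R →+* S) :
    (G.adjMatrix R).map f = G.adjMatrix S := by
  ext i j
  simp [adjMatrix_apply, apply_ite f]

namespace Matrix.IsHermitian

variable {n : Type*} [Fintype n] [DecidableEq n] {A : Matrix n n ℝ} (hA : A.IsHermitian)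
include hA

theorem exists_mulVec_eq_eigenvalues_smul (i : n) :
    ∃ x : n → ℝ, x ≠ 0 ∧ A *ᵥ x = hA.eigenvalues i • x := by
  refine ⟨⇑(hA.eigenvectorBasis i), fun h => ?_, hA.mulVec_eigenvectorBasis i⟩
  exact hA.eigenvectorBasis.orthonormal.ne_zero i (WithLp.ofLp_injective (p := 2) h)

theorem exists_eq_mul_eigenvalues_of_det_eq_zero {s q : ℂ}
    (h : (s • (1 : Matrix n n ℂ) - q • A.map ((↑) : ℝ → ℂ)).det = 0) :
    ∃ i, s = q * hA.eigenvalues i := by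
  rcases eq_or_ne q 0 with rfl | hq
  · obtain ⟨rfl, hn⟩ : s = 0 ∧ Fintype.card n ≠ 0 := by simpa [det_smul] using h
    obtain ⟨i⟩ := Fintype.card_pos_iff.mp (Nat.pos_of_ne_zero hn)
    exact ⟨i, by simp⟩
  · have hfactor : s • (1 : Matrix n n ℂ) - q • A.map (↑) =
        q • (scalar n (s / q) - A.map Complex.ofRealHom) := by
      rw [smul_sub, scalar_apply, ← smul_one_eq_diagonal, smul_smul, mul_div_cancel₀ _ hq]
      rfl
    have hroot : (A.charpoly.map Complex.ofRealHom).eval (s / q) = 0 := by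
      rw [← charpoly_map, eval_charpoly]
      rw [hfactor, det_smul] at h
      exact (mul_eq_zero.mp h).resolve_left (pow_ne_zero _ hq)
    rw [hA.charpoly_eq, Polynomial.map_prod, eval_prod, Finset.prod_eq_zero_iff] at hroot
    obtain ⟨i, -, hi⟩ := hroot
    refine ⟨i, ?_⟩
    rw [mul_comm, ← div_eq_iff hq]
    simpa [sub_eq_zero] using hi

end Matrix.IsHermitian

theorem eq_inv_or_eq_inv_of_one_sub_mul_mul_one_sub_mul_eq_zero {K : Type*} [Field K]
    {a b x : K} (h : (1 - a * x) * (1 - b * x) = 0) : x = a⁻¹ ∨ x = b⁻¹ := by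
  refine (mul_eq_zero.mp h).imp (fun h => ?_) (fun h => ?_) <;>
    exact eq_inv_of_mul_eq_one_right (by linear_combination -h)

theorem Complex.norm_eq_inv_sqrt_of_quadratic_eq_zero {c r : ℝ} (hc : 0 < c)
    (hdisc : r ^ 2 < 4 * c) {q : ℂ} (hq : 1 - r * q + c * q ^ 2 = 0) :
    ‖q‖ = (√c)⁻¹ := by
  have hq' : 1 - r * conj q + c * conj q ^ 2 = 0 := by
    simpa using congrArg conj hq
  have hnonreal : conj q ≠ q := by
    intro hreal
    obtain ⟨x, rfl⟩ : ∃ x : ℝ, (x : ℂ) = q := ⟨q.re, Complex.conj_eq_iff_re.mp hreal⟩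
    have hx : 1 - r * x + c * x ^ 2 = 0 := by exact_mod_cast hq
    nlinarith [sq_nonneg (2 * c * x - r)]
  have hsum : c * (q + conj q) = r := by
    have : (q - conj q) * (c * (q + conj q) - r) = 0 := by linear_combination hq - hq'
    exact sub_eq_zero.mp ((mul_eq_zero.mp this).resolve_left (sub_ne_zero.mpr hnonreal.symm))
  have hnormSq : c * normSq q = 1 := by
    have : (c : ℂ) * (q * conj q) = 1 := by linear_combination q * hsum - hq
    rw [mul_conj] at this
    exact_mod_cast this
  rw [norm_def, eq_inv_of_mul_eq_one_right hnormSq, Real.sqrt_inv]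

theorem bartholdi_riemann_hypothesis_general
    {V : Type*} [Fintype V] [DecidableEq V]
    (G : SimpleGraph V) [DecidableRel G.Adj]
    (t : ℕ)
    (u : ℝ) (hpos : 0 < (1 - u) * ((t : ℝ) + u))
    (heig : ∀ lam : ℝ, (∃ x : V → ℝ, x ≠ 0 ∧ G.adjMatrix ℝ *ᵥ x = lam • x) →
      lam ≠ (t : ℝ) + 1 → lam ^ 2 < 4 * (1 - u) * ((t : ℝ) + u))
    (f : ℂ → ℂ)
    (hf : ∀ q : ℂ, f q =
      (1 - ((1 - u : ℝ) : ℂ) ^ 2 * q ^ 2) ^ (G.edgeFinset.card - Fintype.card V) *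
        ((1 + ((1 - u : ℝ) : ℂ) * (((t : ℝ) + u : ℝ) : ℂ) * q ^ 2) • (1 : Matrix V V ℂ) -
          q • G.adjMatrix ℂ).det) :
    ∀ q : ℂ, f q = 0 →
      q ≠ (((1 - u : ℝ) : ℂ))⁻¹ →
      q ≠ -(((1 - u : ℝ) : ℂ))⁻¹ →
      q ≠ ((((t : ℝ) + u : ℝ) : ℂ))⁻¹ →
      ‖q‖ = (Real.sqrt ((1 - u) * ((t : ℝ) + u)))⁻¹ := by
  intro q hq hq₁ hq₂ hq₃
  rw [hf, mul_eq_zero] at hq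
  rcases hq with hpow | hdet
  · obtain h | h := eq_inv_or_eq_inv_of_one_sub_mul_mul_one_sub_mul_eq_zero
      (a := ((1 - u : ℝ) : ℂ)) (b := -((1 - u : ℝ) : ℂ)) (x := q)
      (by linear_combination (pow_eq_zero_iff'.mp hpow).1)
    exacts [absurd h hq₁, absurd (h.trans (inv_neg ..)) hq₂]
  have hA := G.isHermitian_adjMatrix ℝ
  rw [← G.adjMatrix_map Complex.ofRealHom] at hdet
  obtain ⟨i, hi⟩ := hA.exists_eq_mul_eigenvalues_of_det_eq_zero hdet
  by_cases hperron : hA.eigenvalues i = (t : ℝ) + 1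
  · rw [hperron] at hi
    obtain h | h := eq_inv_or_eq_inv_of_one_sub_mul_mul_one_sub_mul_eq_zero
      (a := ((1 - u : ℝ) : ℂ)) (b := (((t : ℝ) + u : ℝ) : ℂ)) (x := q)
      (by push_cast at hi ⊢; linear_combination hi)
    exacts [absurd h hq₁, absurd h hq₃]
  have hdisc := heig _ (hA.exists_mulVec_eq_eigenvalues_smul i) hperron
  refine Complex.norm_eq_inv_sqrt_of_quadratic_eq_zero hpos (by linarith) ?_
  push_cast at hi ⊢
  linear_combination hi

/-- Riemann hypothesis for the Bartholdi zeta function: let `G` be a `(t+1)`-regular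
connected simple graph and `u` real with `(1−u)(t+u) > 0`.  If every eigenvalue
`lam ≠ t+1` of the adjacency matrix satisfies `lam² < 4(1−u)(t+u)`, then every pole `q`
of `ζ_G(q,u)` (i.e. every zero of
`f(q) = (1−(1−u)²q²)^(n_E−n_V) det((1+(1−u)(t+u)q²)·1 − qA)`)
other than `q = ±(1−u)⁻¹` and `q = (t+u)⁻¹` satisfies `|q| = ((1−u)(t+u))^(−1/2)`. -/
theorem bartholdi_riemann_hypothesis
    {V : Type*} [Fintype V] [DecidableEq V]
    (G : SimpleGraph V) [DecidableRel G.Adj]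
    (hconn : G.Connected)
    (t : ℕ) (hreg : G.IsRegularOfDegree (t + 1))
    (u : ℝ) (hpos : 0 < (1 - u) * ((t : ℝ) + u))
    (heig : ∀ lam : ℝ, (∃ x : V → ℝ, x ≠ 0 ∧ G.adjMatrix ℝ *ᵥ x = lam • x) →
      lam ≠ (t : ℝ) + 1 → lam ^ 2 < 4 * (1 - u) * ((t : ℝ) + u))
    (f : ℂ → ℂ)
    (hf : ∀ q : ℂ, f q =
      (1 - ((1 - u : ℝ) : ℂ) ^ 2 * q ^ 2) ^ (G.edgeFinset.card - Fintype.card V) *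
        ((1 + ((1 - u : ℝ) : ℂ) * (((t : ℝ) + u : ℝ) : ℂ) * q ^ 2) • (1 : Matrix V V ℂ) -
          q • G.adjMatrix ℂ).det) :
    ∀ q : ℂ, f q = 0 →
      q ≠ (((1 - u : ℝ) : ℂ))⁻¹ →
      q ≠ -(((1 - u : ℝ) : ℂ))⁻¹ →
      q ≠ ((((t : ℝ) + u : ℝ) : ℂ))⁻¹ →
      ‖q‖ = (Real.sqrt ((1 - u) * ((t : ℝ) + u)))⁻¹ :=
  bartholdi_riemann_hypothesis_general G t u hpos heig f hf
end

section
/- For a connected simple non-bipartite graph G and u ≠ 1: if n_E > n_V then q = −(1−u)^{-1} is a pole of ζ_G(q,u) of order exactly n_E − n_V, and if n_E = n_V then q = −(1−u)^{-1} is not a pole. -/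
/-!
At `q₀ = -(1 - u)⁻¹` the matrix `1 - q₀A + q₀²Q_u` equals `(1 - u)⁻¹(D + A)`, and the signless
Laplacian `D + A` is nonsingular: `xᵀ(D + A)x = ½ ∑_{i ~ j} (x i + x j)²`, so a kernel vector
changes sign along every edge, has constant absolute value on the connected graph `G`, and its sign
would 2-colour `G`. Hence the determinant factor does not vanish at `q₀`, while
`1 - (1 - u)²q²` has a simple root there, so the multiplicity of `q₀` is `n_E - n_V`.
-/

open Matrix Polynomial Finset

namespace Polynomial

theorem rootMultiplicity_pow {R : Type*} [CommRing R] [IsDomain R] (p : R[X]) (n : ℕ) (a : R) :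
    (p ^ n).rootMultiplicity a = n * p.rootMultiplicity a := by
  classical
  rw [← count_roots, roots_pow, Multiset.count_nsmul, count_roots]

theorem one_sub_C_mul_X_sq_ne_zero {R : Type*} [CommRing R] [Nontrivial R] (a : R) :
    (1 - C a * X ^ 2 : R[X]) ≠ 0 :=
  fun h => by simpa using congrArg (eval 0) h

variable {K : Type*} [Field K] {c : K}

theorem one_sub_C_sq_mul_X_sq_eq (hc : c ≠ 0) :
    (1 - C (c ^ 2) * X ^ 2 : K[X]) = C (-c ^ 2) * ((X - C c⁻¹) * (X - C (-c⁻¹))) := by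
  have h : C c * C c⁻¹ = 1 := by rw [← C_mul, mul_inv_cancel₀ hc, C_1]
  simp only [map_neg, map_pow]
  linear_combination (-(C c * C c⁻¹ + 1)) * h

theorem rootMultiplicity_one_sub_C_sq_mul_X_sq [CharZero K] (hc : c ≠ 0) :
    (1 - C (c ^ 2) * X ^ 2 : K[X]).rootMultiplicity (-c⁻¹) = 1 := by
  classical
  have hne : -c⁻¹ ≠ c⁻¹ := neg_ne_self.mpr (inv_ne_zero hc)
  have hprod : (X - C c⁻¹) * (X - C (-c⁻¹)) ≠ 0 :=
    mul_ne_zero (X_sub_C_ne_zero _) (X_sub_C_ne_zero _)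
  have hC : C (-c ^ 2) ≠ 0 := C_ne_zero.mpr (neg_ne_zero.mpr (pow_ne_zero 2 hc))
  rw [one_sub_C_sq_mul_X_sq_eq hc, rootMultiplicity_mul (mul_ne_zero hC hprod), rootMultiplicity_C,
    rootMultiplicity_mul hprod, rootMultiplicity_X_sub_C, rootMultiplicity_X_sub_C, if_neg hne,
    if_pos rfl]

end Polynomial

namespace Matrix

theorem eval_det_one_sub_X_mul_add_X_sq_mul {R n : Type*} [CommRing R] [Fintype n] [DecidableEq n]
    (A Q : Matrix n n R) (q : R) :
    (of fun i j => C ((1 : Matrix n n R) i j) - C (A i j) * X + C (Q i j) * X ^ 2).det.eval q =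
      (1 - q • A + q ^ 2 • Q).det := by
  rw [← coe_evalRingHom, RingHom.map_det]
  congr 1
  ext i j
  simp only [RingHom.mapMatrix_apply, map_apply, of_apply, coe_evalRingHom, eval_add, eval_sub,
    eval_mul, eval_pow, eval_C, eval_X, add_apply, sub_apply, smul_apply, smul_eq_mul]
  ring

theorem one_sub_neg_inv_smul_add_neg_inv_sq_smul_eq {K n : Type*} [Field K] [DecidableEq n]
    {c : K} (hc : c ≠ 0) (A D : Matrix n n K) :
    1 - (-c⁻¹) • A + (-c⁻¹) ^ 2 • (c • (D - c • 1)) = c⁻¹ • (D + A) := by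
  have h1 : (-c⁻¹) ^ 2 * c = c⁻¹ := by field_simp
  have h2 : (-c⁻¹) ^ 2 * (c * c) = 1 := by field_simp
  simp only [smul_sub, smul_smul, h1, h2, one_smul, smul_add, neg_smul]
  abel

end Matrix

namespace SimpleGraph

section

variable {V : Type*} {G : SimpleGraph V}

theorem abs_eq_of_reachable_of_forall_adj_eq_neg {R : Type*} [AddGroup R] [Lattice R]
    [AddLeftMono R] [AddRightMono R] {x : V → R} (hx : ∀ i j : V, G.Adj i j → x i = -x j)
    {i j : V} (hij : G.Reachable i j) : |x i| = |x j| := by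
  obtain ⟨w⟩ := hij
  induction w with
  | nil => rfl
  | cons h _ ih => rw [← ih, hx _ _ h, abs_neg]

theorem colorable_two_of_forall_adj_eq_neg {R : Type*} [AddGroup R] [LinearOrder R]
    [AddLeftMono R] {x : V → R} (hx₀ : ∀ v, x v ≠ 0) (hx : ∀ i j : V, G.Adj i j → x i = -x j) :
    G.Colorable 2 :=
  (Coloring.mk (fun v => decide (0 < x v)) fun {i j} hij => by
    rcases (hx₀ j).lt_or_gt with h | h <;>
      simp [hx i j hij, h, h.not_gt]).colorable

end

variable {V : Type*} [Fintype V] [DecidableEq V] (G : SimpleGraph V) [DecidableRel G.Adj]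

def signlessLapMatrix (R : Type*) [AddMonoidWithOne R] : Matrix V V R :=
  G.degMatrix R + G.adjMatrix R

theorem dotProduct_mulVec_signlessLapMatrix {R : Type*} [Field R] [CharZero R] (x : V → R) :
    x ⬝ᵥ (G.signlessLapMatrix R *ᵥ x) =
      (∑ i : V, ∑ j : V, if G.Adj i j then (x i + x j) ^ 2 else 0) / 2 := by
  simp_rw [signlessLapMatrix, add_mulVec, dotProduct_add, dotProduct_mulVec_degMatrix,
    dotProduct_mulVec_adjMatrix, ← sum_add_distrib, degree_eq_sum_if_adj, sum_mul, ite_mul,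
    one_mul, zero_mul, ← sum_add_distrib, ite_add_ite, add_zero]
  rw [← add_self_div_two (∑ x_1 : V, ∑ x_2 : V, _)]
  conv_lhs => enter [1, 2, 2, i, 2, j]; rw [if_congr (G.adj_comm i j) rfl rfl]
  conv_lhs => enter [1, 2]; rw [Finset.sum_comm]
  simp_rw [← sum_add_distrib, ite_add_ite]
  congr 2 with i
  congr 2 with j
  ring_nf

theorem dotProduct_mulVec_signlessLapMatrix_eq_zero_iff_forall_adj {R : Type*} [Field R]
    [LinearOrder R] [IsStrictOrderedRing R] (x : V → R) :
    x ⬝ᵥ (G.signlessLapMatrix R *ᵥ x) = 0 ↔ ∀ i j : V, G.Adj i j → x i = -x j := by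
  simp (disch := intros; positivity)
    [dotProduct_mulVec_signlessLapMatrix, sum_eq_zero_iff_of_nonneg, add_eq_zero_iff_eq_neg]

variable {G}

theorem det_signlessLapMatrix_ne_zero (hconn : G.Connected)
    (hnb : ¬ G.Colorable 2) : (G.signlessLapMatrix ℝ).det ≠ 0 := by
  intro hdet
  obtain ⟨x, hx, hker⟩ := exists_mulVec_eq_zero_iff.mpr hdet
  have hadj := (G.dotProduct_mulVec_signlessLapMatrix_eq_zero_iff_forall_adj x).mp
    (by rw [hker, dotProduct_zero])
  obtain ⟨w, hw⟩ := Function.ne_iff.mp hx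
  refine hnb (colorable_two_of_forall_adj_eq_neg (fun v hv => hw ?_) hadj)
  rw [Pi.zero_apply, ← abs_eq_zero, abs_eq_of_reachable_of_forall_adj_eq_neg hadj
    (hconn.preconnected w v), hv, abs_zero]

end SimpleGraph

/-- For a connected simple non-bipartite graph `G` and `u ≠ 1`: the reciprocal of the
Bartholdi zeta function in `q` is the polynomial
`P = (1 − (1−u)²X²)^(n_E−n_V) · det(1 − XA + X²Q_u)`.  If `n_E > n_V` then
`q = −(1−u)⁻¹` is a pole of `ζ_G(q,u)` of order exactly `n_E − n_V` (a root of `P` of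
multiplicity `n_E − n_V`), and if `n_E = n_V` then `q = −(1−u)⁻¹` is not a pole
(not a root of `P`). -/
theorem pole_order_at_neg_one_sub_u_inv_nonbipartite
    {V : Type*} [Fintype V] [DecidableEq V]
    (G : SimpleGraph V) [DecidableRel G.Adj]
    (hconn : G.Connected) (hnb : ¬ G.Colorable 2)
    (u : ℝ) (hu : u ≠ 1)
    (A D Qu : Matrix V V ℝ)
    (hA : A = G.adjMatrix ℝ)
    (hD : D = Matrix.diagonal fun v => (G.degree v : ℝ))
    (hQ : Qu = (1 - u) • (D - (1 - u) • (1 : Matrix V V ℝ)))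
    (P : Polynomial ℝ)
    (hP : P = (1 - C ((1 - u) ^ 2) * X ^ 2) ^ (G.edgeFinset.card - Fintype.card V) *
      (Matrix.of fun i j : V =>
        C ((1 : Matrix V V ℝ) i j) - C (A i j) * X + C (Qu i j) * X ^ 2).det) :
    (G.edgeFinset.card > Fintype.card V →
      P.rootMultiplicity (-(1 - u)⁻¹) = G.edgeFinset.card - Fintype.card V) ∧
    (G.edgeFinset.card = Fintype.card V → P.eval (-(1 - u)⁻¹) ≠ 0) := by
  have hu' : (1 : ℝ) - u ≠ 0 := sub_ne_zero.mpr hu.symm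
  have hdet : (Matrix.of fun i j : V =>
      C ((1 : Matrix V V ℝ) i j) - C (A i j) * X + C (Qu i j) * X ^ 2).det.eval (-(1 - u)⁻¹) ≠
        0 := by
    rw [eval_det_one_sub_X_mul_add_X_sq_mul, hQ, one_sub_neg_inv_smul_add_neg_inv_sq_smul_eq hu',
      det_smul, hA, hD]
    exact mul_ne_zero (pow_ne_zero _ (inv_ne_zero hu')) (G.det_signlessLapMatrix_ne_zero hconn hnb)
  subst hP
  refine ⟨fun _ => ?_, fun hEV => ?_⟩
  · rw [rootMultiplicity_mul (mul_ne_zero (pow_ne_zero _ (one_sub_C_mul_X_sq_ne_zero _))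
      (fun h => hdet (by rw [h, eval_zero]))), rootMultiplicity_pow,
      rootMultiplicity_one_sub_C_sq_mul_X_sq hu', rootMultiplicity_eq_zero hdet, mul_one, add_zero]
  · rwa [hEV, Nat.sub_self, pow_zero, one_mul]
end
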